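/- arXiv:2304.12606 — 5 statements merged into one kernel-verified Lean document; each statement's English description precedes it below -/
import Mathlib

section
/- If p ≠ q are two distinct probability mass functions on a finite set with q(x) > 0 for all x, then T_α(p‖q) → ∞ as α → ∞. -/
/-- For distinct pmfs `p ≠ q` with `q` everywhere positive, `T_α(p‖q) → ∞` as `α → ∞`. -/
theorem tsallis_tendsto_atTop {X : Type*} [Fintype X] (p q : X → ℝ)
    (hp : ∀ x, 0 ≤ p x) (hq : ∀ x, 0 < q x)
    (hps : ∑ x, p x = 1) (hqs : ∑ x, q x = 1)
    (hne : p ≠ q) :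
    Filter.Tendsto
      (fun α : ℝ => (1 / (α - 1)) * ((∑ x, p x ^ α * q x ^ (1 - α)) - 1))
      Filter.atTop Filter.atTop := by
  obtain ⟨x0, hx0⟩ : ∃ x, q x < p x := by
    by_contra h
    push_neg at h
    obtain ⟨x1, hx1⟩ := Function.ne_iff.mp hne
    have hlt : ∑ x, p x < ∑ x, q x :=
      Finset.sum_lt_sum (fun x _ => h x)
        ⟨x1, Finset.mem_univ x1, lt_of_le_of_ne (h x1) hx1⟩
    rw [hps, hqs] at hlt
    exact lt_irrefl 1 hlt
  have hq0 := hq x0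
  have hp0 : 0 < p x0 := lt_trans hq0 hx0
  set r : ℝ := p x0 / q x0 with hr
  have hrpos : 0 < r := div_pos hp0 hq0
  have hr1 : 1 < r := (one_lt_div hq0).mpr hx0
  set L : ℝ := Real.log r with hLdef
  have hL : 0 < L := Real.log_pos hr1
  set K : ℝ := q x0 * L ^ 2 / 4 with hK
  have hKpos : 0 < K := by positivity
  have hlin : Filter.Tendsto (fun α : ℝ => K * α - 1) Filter.atTop Filter.atTop := by
    apply Filter.tendsto_atTop_add_const_right
    exact Filter.Tendsto.const_mul_atTop hKpos Filter.tendsto_id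
  refine Filter.tendsto_atTop_mono' _ ?_ hlin
  filter_upwards [Filter.eventually_ge_atTop (2 : ℝ)] with α hα
  have hα1 : (0 : ℝ) < α - 1 := by linarith
  have hαpos : (0 : ℝ) ≤ α := by linarith
  -- the key single term bound
  have hterm_eq : p x0 ^ α * q x0 ^ (1 - α) = q x0 * r ^ α := by
    rw [hr, Real.div_rpow hp0.le hq0.le, Real.rpow_sub hq0, Real.rpow_one]
    have hq0α : (0:ℝ) < q x0 ^ α := Real.rpow_pos_of_pos hq0 α
    field_simp
  have hexp : (α * L / 2) ^ 2 ≤ r ^ α := by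
    have h1 : r ^ α = Real.exp (L * α) := by
      rw [Real.rpow_def_of_pos hrpos]
    have h2 : Real.exp (L * α) = Real.exp (L * α / 2) ^ 2 := by
      rw [sq, ← Real.exp_add]; ring_nf
    have h3 : α * L / 2 ≤ Real.exp (L * α / 2) := by
      have := Real.add_one_le_exp (L * α / 2)
      nlinarith
    have h4 : (0:ℝ) ≤ α * L / 2 := by positivity
    rw [h1, h2]
    exact pow_le_pow_left₀ h4 h3 2
  have hterm : K * α ^ 2 ≤ p x0 ^ α * q x0 ^ (1 - α) := by
    rw [hterm_eq]
    calc K * α ^ 2 = q x0 * (α * L / 2) ^ 2 := by rw [hK]; ring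
      _ ≤ q x0 * r ^ α := by
          exact mul_le_mul_of_nonneg_left hexp hq0.le
  have hsum : K * α ^ 2 ≤ ∑ x, p x ^ α * q x ^ (1 - α) :=
    hterm.trans (Finset.single_le_sum
      (fun x _ => mul_nonneg (Real.rpow_nonneg (hp x) α)
        (Real.rpow_nonneg (hq x).le (1 - α))) (Finset.mem_univ x0))
  have step1 : K * α - 1 ≤ (1 / (α - 1)) * (K * α ^ 2 - 1) := by
    rw [one_div_mul_eq_div, le_div_iff₀ hα1]
    nlinarith [hKpos.le]
  refine step1.trans ?_
  apply mul_le_mul_of_nonneg_left _ (by positivity)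
  linarith
end

section
/- The conditional Rényi entropy H̃_α(X|Z) = (1/(1-α)) log(∑_z p(z) ∑_x p(x|z)^α) is non-increasing in α on (1, ∞). -/
/-!
Writing `q(x|z) = p(x,z) / p(z)`, the sum inside the logarithm is `∑_{x,z} p(x,z) q(x|z)^(α-1)`,
so `H̃_α(X|Z) = -log M_{α-1}`, where `M_t = (∑_{x,z} p(x,z) q(x|z)^t)^(1/t)` is the power mean of
`q` under the joint distribution. Power means increase with `t > 0`: this is Jensen's inequality
for the convex map `y ↦ y^(t₂/t₁)`.
-/

open Finset

namespace Real

variable {ι : Type*} (s : Finset ι)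

theorem rpow_mean_le_rpow_mean (w z : ι → ℝ) (hw : ∀ i ∈ s, 0 ≤ w i) (hw' : ∑ i ∈ s, w i = 1)
    (hz : ∀ i ∈ s, 0 ≤ z i) {a b : ℝ} (ha : 0 < a) (hab : a ≤ b) :
    (∑ i ∈ s, w i * z i ^ a) ^ (1 / a) ≤ (∑ i ∈ s, w i * z i ^ b) ^ (1 / b) := by
  have hb : 0 < b := ha.trans_le hab
  have hA : 0 ≤ ∑ i ∈ s, w i * z i ^ a :=
    sum_nonneg fun i hi => mul_nonneg (hw i hi) (rpow_nonneg (hz i hi) a)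
  have jensen : (∑ i ∈ s, w i * z i ^ a) ^ (b / a) ≤ ∑ i ∈ s, w i * z i ^ b := by
    have := rpow_arith_mean_le_arith_mean_rpow s w (fun i => z i ^ a) hw hw'
      (fun i hi => rpow_nonneg (hz i hi) a) ((one_le_div ha).2 hab)
    refine this.trans_eq (sum_congr rfl fun i hi => ?_)
    rw [← rpow_mul (hz i hi), mul_div_cancel₀ b ha.ne']
  calc (∑ i ∈ s, w i * z i ^ a) ^ (1 / a)
      = ((∑ i ∈ s, w i * z i ^ a) ^ (b / a)) ^ (1 / b) := by
        rw [← rpow_mul hA]; field_simp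
    _ ≤ (∑ i ∈ s, w i * z i ^ b) ^ (1 / b) :=
        rpow_le_rpow (rpow_nonneg hA _) jensen (one_div_pos.2 hb).le

theorem log_sum_mul_rpow_div_le (w z : ι → ℝ) (hw : ∀ i ∈ s, 0 ≤ w i) (hw' : ∑ i ∈ s, w i = 1)
    (hz : ∀ i ∈ s, 0 ≤ z i) {a b : ℝ} (ha : 0 < a) (hab : a ≤ b)
    (hA : 0 < ∑ i ∈ s, w i * z i ^ a) :
    log (∑ i ∈ s, w i * z i ^ a) / a ≤ log (∑ i ∈ s, w i * z i ^ b) / b := by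
  have hmean := rpow_mean_le_rpow_mean s w z hw hw' hz ha hab
  have hB : 0 < ∑ i ∈ s, w i * z i ^ b := by
    refine (sum_nonneg fun i hi => mul_nonneg (hw i hi) (rpow_nonneg (hz i hi) b)).lt_of_ne' ?_
    intro hB
    rw [hB, zero_rpow (one_div_pos.2 (ha.trans_le hab)).ne'] at hmean
    exact (rpow_pos_of_pos hA _).not_ge hmean
  have := log_le_log (rpow_pos_of_pos hA _) hmean
  rwa [log_rpow hA, log_rpow hB, one_div_mul_eq_div, one_div_mul_eq_div] at this

end Real

theorem mul_div_rpow_eq {a c α : ℝ} (ha : 0 ≤ a) (hac : a ≤ c) (hα : α ≠ 0) :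
    c * (a / c) ^ α = a * (a / c) ^ (α - 1) := by
  calc c * (a / c) ^ α = c * (a / c) ^ (α - 1 + 1) := by rw [sub_add_cancel]
    _ = c * (a / c) * (a / c) ^ (α - 1) := by
        rw [Real.rpow_add_one' (div_nonneg ha (ha.trans hac)) (by rwa [sub_add_cancel])]; ring
    _ = a * (a / c) ^ (α - 1) := by
        rw [mul_div_cancel_of_imp' fun hc => le_antisymm (hc ▸ hac) ha]

theorem sum_mul_sum_div_rpow_eq_sum_prod {X Z : Type*} [Fintype X] [Fintype Z]
    (p : X → Z → ℝ) (hp : ∀ x z, 0 ≤ p x z) {α : ℝ} (hα : α ≠ 0) :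
    ∑ z, (∑ x', p x' z) * ∑ x, (p x z / ∑ x', p x' z) ^ α
      = ∑ i : X × Z, p i.1 i.2 * (p i.1 i.2 / ∑ x', p x' i.2) ^ (α - 1) := by
  rw [Fintype.sum_prod_type, sum_comm]
  refine sum_congr rfl fun z _ => ?_
  rw [mul_sum]
  exact sum_congr rfl fun x _ => mul_div_rpow_eq (hp x z)
    (single_le_sum (fun x' _ => hp x' z) (mem_univ x)) hα

theorem cond_renyi_antitone_general {X Z : Type*} [Fintype X] [Fintype Z]
    (p : X → Z → ℝ)
    (hp : ∀ x z, 0 ≤ p x z) (hsum : ∑ x, ∑ z, p x z = 1)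
    (α₁ α₂ : ℝ) (h1 : 1 < α₁) (h12 : α₁ ≤ α₂) :
    (1 / (1 - α₂)) *
        Real.log (∑ z, (∑ x', p x' z) * ∑ x, (p x z / (∑ x', p x' z)) ^ α₂)
      ≤ (1 / (1 - α₁)) *
        Real.log (∑ z, (∑ x', p x' z) * ∑ x, (p x z / (∑ x', p x' z)) ^ α₁) := by
  set w : X × Z → ℝ := fun i => p i.1 i.2
  set q : X × Z → ℝ := fun i => p i.1 i.2 / ∑ x', p x' i.2
  have hw : ∀ i ∈ univ, 0 ≤ w i := fun i _ => hp i.1 i.2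
  have hw' : ∑ i, w i = 1 := by rw [Fintype.sum_prod_type]; exact hsum
  have hq : ∀ i ∈ univ, 0 ≤ q i := fun i _ => div_nonneg (hp _ _) (sum_nonneg fun _ _ => hp _ _)
  have hA : 0 < ∑ i, w i * q i ^ (α₁ - 1) := by
    obtain ⟨i, -, hi⟩ := exists_ne_zero_of_sum_ne_zero (hw'.trans_ne one_ne_zero)
    have hwi : 0 < w i := (hw i (mem_univ i)).lt_of_ne' hi
    have hqi : 0 < q i := div_pos hwi (hwi.trans_le
      (single_le_sum (fun x' _ => hp x' i.2) (mem_univ i.1)))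
    exact sum_pos' (fun j hj => mul_nonneg (hw j hj) (Real.rpow_nonneg (hq j hj) _))
      ⟨i, mem_univ i, mul_pos hwi (Real.rpow_pos_of_pos hqi _)⟩
  have hcoef : ∀ α L : ℝ, 1 / (1 - α) * L = -(L / (α - 1)) := fun α L => by
    rw [← neg_sub α 1, div_neg, neg_mul, one_div_mul_eq_div]
  rw [sum_mul_sum_div_rpow_eq_sum_prod p hp (by linarith),
    sum_mul_sum_div_rpow_eq_sum_prod p hp (by linarith), hcoef, hcoef, neg_le_neg_iff]
  exact Real.log_sum_mul_rpow_div_le univ w q hw hw' hq (by linarith) (by linarith) hA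

/-- The conditional Rényi entropy `H̃_α(X|Z)` is non-increasing in `α` on `(1, ∞)`. -/
theorem cond_renyi_antitone {X Z : Type*} [Fintype X] [Fintype Z]
    (p : X → Z → ℝ)
    (hp : ∀ x z, 0 ≤ p x z) (hsum : ∑ x, ∑ z, p x z = 1)
    (hpos : ∀ z, 0 < ∑ x, p x z)
    (α₁ α₂ : ℝ) (h1 : 1 < α₁) (h12 : α₁ ≤ α₂) :
    (1 / (1 - α₂)) *
        Real.log (∑ z, (∑ x', p x' z) * ∑ x, (p x z / (∑ x', p x' z)) ^ α₂)
      ≤ (1 / (1 - α₁)) *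
        Real.log (∑ z, (∑ x', p x' z) * ∑ x, (p x z / (∑ x', p x' z)) ^ α₁) :=
  cond_renyi_antitone_general p hp hsum α₁ α₂ h1 h12
end

section
/- Data processing inequality for conditional Rényi entropy: if X − Y − Z form a Markov chain on finite sets and α ∈ (1,∞), then H̃_α(X|Y) ≤ H̃_α(X|Z), where H̃_α(X|W) = (1/(1-α)) log(∑_w p(w) ∑_x p(x|w)^α). -/
/-!
For each `z`, `p(x|z) = ∑_y p(y|z) p(x|y)` is a convex combination of the `p(x|y)`, so Jensen's
inequality for `t ↦ t ^ α` gives `p(x|z) ^ α ≤ ∑_y p(y|z) p(x|y) ^ α`. Averaging over `z` with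
weights `p(z)` yields `∑_z p(z) ∑_x p(x|z) ^ α ≤ ∑_y p(y) ∑_x p(x|y) ^ α`, and the inequality
between the entropies follows because `log` is monotone while `1 / (1 - α) < 0`.
-/

open Finset Real

section

variable {ι κ X : Type*} [Fintype ι] [Fintype κ] [Fintype X] {α : ℝ}

/-- Jensen's inequality with unnormalised weights; when they sum to `0` the left side is `0`. -/
lemma sum_mul_div_sum_rpow_le (w f : ι → ℝ) (hw : ∀ i, 0 ≤ w i) (hf : ∀ i, 0 ≤ f i)
    (hα : 1 ≤ α) :
    (∑ i, w i) * ((∑ i, w i * f i) / ∑ i, w i) ^ α ≤ ∑ i, w i * f i ^ α := by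
  have hrhs : 0 ≤ ∑ i, w i * f i ^ α :=
    sum_nonneg fun i _ => mul_nonneg (hw i) (rpow_nonneg (hf i) α)
  rcases (sum_nonneg fun i _ => hw i).eq_or_lt with hzero | hpos
  · rw [← hzero, zero_mul]
    exact hrhs
  have hnormalise : ∀ g : ι → ℝ, (∑ i, w i * g i) / ∑ i, w i = ∑ i, w i / (∑ i, w i) * g i :=
    fun g => by rw [sum_div]; exact sum_congr rfl fun i _ => by ring
  have hjensen : ((∑ i, w i * f i) / ∑ i, w i) ^ α ≤ (∑ i, w i * f i ^ α) / ∑ i, w i := by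
    rw [hnormalise, hnormalise]
    refine rpow_arith_mean_le_arith_mean_rpow _ _ _ (fun i _ => div_nonneg (hw i) hpos.le) ?_
      (fun i _ => hf i) hα
    rw [← sum_div, div_self hpos.ne']
  calc (∑ i, w i) * ((∑ i, w i * f i) / ∑ i, w i) ^ α
      ≤ (∑ i, w i) * ((∑ i, w i * f i ^ α) / ∑ i, w i) := by gcongr
    _ = ∑ i, w i * f i ^ α := mul_div_cancel₀ _ hpos.ne'

lemma sum_mul_sum_div_rpow_le (w : ι → κ → ℝ) (a : ι → X → ℝ) (hw : ∀ i k, 0 ≤ w i k)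
    (ha : ∀ i x, 0 ≤ a i x) (hα : 1 ≤ α) :
    ∑ k, (∑ i, w i k) * ∑ x, ((∑ i, w i k * a i x) / ∑ i, w i k) ^ α
      ≤ ∑ i, (∑ k, w i k) * ∑ x, a i x ^ α :=
  calc ∑ k, (∑ i, w i k) * ∑ x, ((∑ i, w i k * a i x) / ∑ i, w i k) ^ α
      ≤ ∑ k, ∑ x, ∑ i, w i k * a i x ^ α := by
        refine sum_le_sum fun k _ => ?_
        rw [mul_sum]
        exact sum_le_sum fun x _ =>
          sum_mul_div_sum_rpow_le _ _ (fun i => hw i k) (fun i => ha i x) hα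
    _ = ∑ k, ∑ i, w i k * ∑ x, a i x ^ α := by
        simp only [mul_sum]
        exact sum_congr rfl fun k _ => sum_comm
    _ = ∑ i, (∑ k, w i k) * ∑ x, a i x ^ α := by
        rw [sum_comm]
        simp only [sum_mul]

lemma sum_rpow_pos_of_sum_pos (q : X → ℝ) (hq : ∀ x, 0 ≤ q x) (hsum : 0 < ∑ x, q x) :
    0 < ∑ x, q x ^ α := by
  obtain ⟨x, -, hx⟩ := (sum_pos_iff_of_nonneg fun x _ => hq x).mp hsum
  exact sum_pos' (fun x _ => rpow_nonneg (hq x) α) ⟨x, mem_univ x, rpow_pos_of_pos hx α⟩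

lemma sum_mul_sum_div_rpow_pos (w : ι → κ → ℝ) (a : ι → X → ℝ) (hw : ∀ i k, 0 ≤ w i k)
    (ha : ∀ i x, 0 ≤ a i x) (has : ∀ i, ∑ x, a i x = 1) (hmass : 0 < ∑ k, ∑ i, w i k) :
    0 < ∑ k, (∑ i, w i k) * ∑ x, ((∑ i, w i k * a i x) / ∑ i, w i k) ^ α := by
  have hq : ∀ k x, 0 ≤ (∑ i, w i k * a i x) / ∑ i, w i k := fun k x =>
    div_nonneg (sum_nonneg fun i _ => mul_nonneg (hw i k) (ha i x)) (sum_nonneg fun i _ => hw i k)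
  obtain ⟨k, -, hk⟩ := (sum_pos_iff_of_nonneg fun k _ => sum_nonneg fun i _ => hw i k).mp hmass
  have hqsum : ∑ x, (∑ i, w i k * a i x) / ∑ i, w i k = 1 := by
    rw [← sum_div, sum_comm]
    simp only [← mul_sum, has, mul_one]
    exact div_self hk.ne'
  refine sum_pos' (fun k _ => mul_nonneg (sum_nonneg fun i _ => hw i k)
    (sum_nonneg fun x _ => rpow_nonneg (hq k x) α)) ⟨k, mem_univ k, mul_pos hk ?_⟩
  exact sum_rpow_pos_of_sum_pos _ (hq k) (hqsum ▸ one_pos)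

end

theorem cond_renyi_data_processing_general {X Y Z : Type*} [Fintype X] [Fintype Y] [Fintype Z]
    (pY : Y → ℝ) (a : Y → X → ℝ) (c : Y → Z → ℝ)
    (hpY : ∀ y, 0 ≤ pY y) (hpYs : ∑ y, pY y = 1)
    (ha : ∀ y x, 0 ≤ a y x) (has : ∀ y, ∑ x, a y x = 1)
    (hc : ∀ y z, 0 ≤ c y z) (hcs : ∀ y, ∑ z, c y z = 1)
    (α : ℝ) (hα : 1 < α) :
    (1 / (1 - α)) * Real.log (∑ y, pY y * ∑ x, a y x ^ α)
      ≤ (1 / (1 - α)) * Real.log (∑ z, (∑ y, pY y * c y z) *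
          ∑ x, ((∑ y, pY y * c y z * a y x) / (∑ y, pY y * c y z)) ^ α) := by
  have hw : ∀ y z, 0 ≤ pY y * c y z := fun y z => mul_nonneg (hpY y) (hc y z)
  have hmarginal : ∀ y, ∑ z, pY y * c y z = pY y := fun y => by rw [← mul_sum, hcs, mul_one]
  have hmix := sum_mul_sum_div_rpow_le (fun y z => pY y * c y z) a hw ha hα.le
  have hpos := sum_mul_sum_div_rpow_pos (α := α) (fun y z => pY y * c y z) a hw ha has
    (by rw [sum_comm]; simp only [hmarginal, hpYs, one_pos])
  simp only [hmarginal] at hmix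
  exact mul_le_mul_of_nonpos_left (log_le_log hpos hmix)
    (div_nonpos_of_nonneg_of_nonpos zero_le_one (by linarith))

/-- Data processing inequality for the conditional Rényi entropy: if `X − Y − Z`
is a Markov chain and `α ∈ (1, ∞)`, then `H̃_α(X|Y) ≤ H̃_α(X|Z)`. -/
theorem cond_renyi_data_processing {X Y Z : Type*} [Fintype X] [Fintype Y] [Fintype Z]
    (pY : Y → ℝ) (a : Y → X → ℝ) (c : Y → Z → ℝ)
    (hpY : ∀ y, 0 ≤ pY y) (hpYs : ∑ y, pY y = 1)
    (ha : ∀ y x, 0 ≤ a y x) (has : ∀ y, ∑ x, a y x = 1)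
    (hc : ∀ y z, 0 ≤ c y z) (hcs : ∀ y, ∑ z, c y z = 1)
    (hZpos : ∀ z, 0 < ∑ y, pY y * c y z)
    (α : ℝ) (hα : 1 < α) :
    (1 / (1 - α)) * Real.log (∑ y, pY y * ∑ x, a y x ^ α)
      ≤ (1 / (1 - α)) * Real.log (∑ z, (∑ y, pY y * c y z) *
          ∑ x, ((∑ y, pY y * c y z * a y x) / (∑ y, pY y * c y z)) ^ α) :=
  cond_renyi_data_processing_general pY a c hpY hpYs ha has hc hcs α hα
end

section
/- The conditional Rényi entropy H̃_α(X|Z) converges to log(1 / max_{x,z} p(x|z)) as α → +∞, where the maximum is over pairs (x,z) with p(z) > 0. -/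
open Filter Real

private lemma aux_tendsto_renyi (c L : ℝ) :
    Tendsto (fun α : ℝ => (1 / (1 - α)) * (c + α * L)) atTop (nhds (-L)) := by
  have h1 : Tendsto (fun α : ℝ => α - 1) atTop atTop :=
    tendsto_atTop_add_const_right _ (-1) tendsto_id
  have h2 : Tendsto (fun α : ℝ => (1 - α)⁻¹) atTop (nhds 0) := by
    have := h1.inv_tendsto_atTop.neg
    simp only [neg_zero] at this
    refine this.congr fun α => ?_
    simp [Pi.inv_apply, ← inv_neg, neg_sub]
  have h3 : Tendsto (fun α : ℝ => -L + (c + L) * (1 - α)⁻¹) atTop (nhds (-L)) := by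
    have := (tendsto_const_nhds (x := -L)).add ((tendsto_const_nhds (x := c + L)).mul h2)
    simpa using this
  refine h3.congr' ?_
  filter_upwards [eventually_ge_atTop (2:ℝ)] with α hα
  have : (1:ℝ) - α ≠ 0 := by linarith
  field_simp
  ring

/-- The conditional Rényi entropy `H̃_α(X|Z)` converges to
`log (1 / max_{x,z} p(x|z))` as `α → ∞`. -/
theorem cond_renyi_tendsto_infty {X Z : Type*} [Fintype X] [Fintype Z]
    [Nonempty X] [Nonempty Z]
    (p : X → Z → ℝ)
    (hp : ∀ x z, 0 ≤ p x z) (hsum : ∑ x, ∑ z, p x z = 1)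
    (hpos : ∀ z, 0 < ∑ x, p x z) :
    Filter.Tendsto
      (fun α : ℝ => (1 / (1 - α)) *
        Real.log (∑ z, (∑ x', p x' z) * ∑ x, (p x z / (∑ x', p x' z)) ^ α))
      Filter.atTop
      (nhds (Real.log (1 / ⨆ xz : X × Z, p xz.1 xz.2 / (∑ x', p x' xz.2)))) := by
  set M : ℝ := ⨆ xz : X × Z, p xz.1 xz.2 / (∑ x', p x' xz.2) with hMdef
  have hq0 : ∀ x z, 0 ≤ p x z / (∑ x', p x' z) :=
    fun x z => div_nonneg (hp x z) (hpos z).le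
  have hbdd : BddAbove (Set.range fun xz : X × Z => p xz.1 xz.2 / (∑ x', p x' xz.2)) :=
    Set.Finite.bddAbove (Set.finite_range _)
  have hqM : ∀ x z, p x z / (∑ x', p x' z) ≤ M := fun x z => le_ciSup hbdd (x, z)
  obtain ⟨⟨x0, z0⟩, hmax⟩ :=
    Finite.exists_max (fun xz : X × Z => p xz.1 xz.2 / (∑ x', p x' xz.2))
  have hMeq : M = p x0 z0 / (∑ x', p x' z0) :=
    le_antisymm (ciSup_le hmax) (le_ciSup hbdd (x0, z0))
  have hM : 0 < M := by
    obtain ⟨z⟩ := ‹Nonempty Z›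
    have hx : ∃ x, 0 < p x z := by
      by_contra h
      push_neg at h
      have : ∑ x, p x z ≤ 0 := Finset.sum_nonpos fun x _ => h x
      linarith [hpos z]
    obtain ⟨x, hx⟩ := hx
    exact lt_of_lt_of_le (div_pos hx (hpos z)) (hqM x z)
  have hsum1 : ∑ z, ∑ x', p x' z = 1 := by rw [Finset.sum_comm]; exact hsum
  set cX : ℝ := (Fintype.card X : ℝ) with hcXdef
  have hcX : 0 < cX := by
    simp only [hcXdef, Nat.cast_pos]
    exact Fintype.card_pos
  -- key two-sided bound for α ≥ 2
  have key : ∀ α : ℝ, 2 ≤ α →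
      (1 / (1 - α)) * (Real.log cX + α * Real.log M) ≤
        (1 / (1 - α)) *
          Real.log (∑ z, (∑ x', p x' z) * ∑ x, (p x z / (∑ x', p x' z)) ^ α) ∧
      (1 / (1 - α)) *
          Real.log (∑ z, (∑ x', p x' z) * ∑ x, (p x z / (∑ x', p x' z)) ^ α) ≤
        (1 / (1 - α)) * (Real.log (∑ x', p x' z0) + α * Real.log M) := by
    intro α hα
    have hα0 : (0:ℝ) ≤ α := by linarith
    have hMα : 0 < M ^ α := Real.rpow_pos_of_pos hM α
    have upper : (∑ z, (∑ x', p x' z) * ∑ x, (p x z / (∑ x', p x' z)) ^ α)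
        ≤ cX * M ^ α := by
      calc (∑ z, (∑ x', p x' z) * ∑ x, (p x z / (∑ x', p x' z)) ^ α)
          ≤ ∑ z, (∑ x', p x' z) * (cX * M ^ α) := by
            refine Finset.sum_le_sum fun z _ => ?_
            refine mul_le_mul_of_nonneg_left ?_ (hpos z).le
            calc (∑ x, (p x z / (∑ x', p x' z)) ^ α)
                ≤ ∑ _x : X, M ^ α :=
                  Finset.sum_le_sum fun x _ =>
                    Real.rpow_le_rpow (hq0 x z) (hqM x z) hα0
              _ = cX * M ^ α := by
                  simp [Finset.sum_const, nsmul_eq_mul, hcXdef]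
        _ = (∑ z, ∑ x', p x' z) * (cX * M ^ α) := by rw [Finset.sum_mul]
        _ = cX * M ^ α := by rw [hsum1, one_mul]
    have lower : (∑ x', p x' z0) * M ^ α
        ≤ ∑ z, (∑ x', p x' z) * ∑ x, (p x z / (∑ x', p x' z)) ^ α := by
      have h1 : (p x0 z0 / (∑ x', p x' z0)) ^ α ≤ ∑ x, (p x z0 / (∑ x', p x' z0)) ^ α :=
        Finset.single_le_sum (fun x _ => Real.rpow_nonneg (hq0 x z0) α)
          (Finset.mem_univ x0)
      have h2 : (∑ x', p x' z0) * ∑ x, (p x z0 / (∑ x', p x' z0)) ^ α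
          ≤ ∑ z, (∑ x', p x' z) * ∑ x, (p x z / (∑ x', p x' z)) ^ α :=
        Finset.single_le_sum
          (fun z _ => mul_nonneg (hpos z).le
            (Finset.sum_nonneg fun x _ => Real.rpow_nonneg (hq0 x z) α))
          (Finset.mem_univ z0)
      calc (∑ x', p x' z0) * M ^ α
          = (∑ x', p x' z0) * (p x0 z0 / (∑ x', p x' z0)) ^ α := by rw [hMeq]
        _ ≤ (∑ x', p x' z0) * ∑ x, (p x z0 / (∑ x', p x' z0)) ^ α :=
            mul_le_mul_of_nonneg_left h1 (hpos z0).le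
        _ ≤ _ := h2
    have hSpos : 0 < ∑ z, (∑ x', p x' z) * ∑ x, (p x z / (∑ x', p x' z)) ^ α :=
      lt_of_lt_of_le (mul_pos (hpos z0) hMα) lower
    have hlogU : Real.log (∑ z, (∑ x', p x' z) * ∑ x, (p x z / (∑ x', p x' z)) ^ α)
        ≤ Real.log cX + α * Real.log M := by
      have := Real.log_le_log hSpos upper
      rwa [Real.log_mul (ne_of_gt hcX) (ne_of_gt hMα), Real.log_rpow hM] at this
    have hlogL : Real.log (∑ x', p x' z0) + α * Real.log M
        ≤ Real.log (∑ z, (∑ x', p x' z) * ∑ x, (p x z / (∑ x', p x' z)) ^ α) := by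
      have := Real.log_le_log (mul_pos (hpos z0) hMα) lower
      rwa [Real.log_mul (ne_of_gt (hpos z0)) (ne_of_gt hMα), Real.log_rpow hM] at this
    have hneg : (1 / (1 - α)) ≤ 0 := by
      apply le_of_lt
      apply div_neg_of_pos_of_neg one_pos
      linarith
    exact ⟨mul_le_mul_of_nonpos_left hlogU hneg, mul_le_mul_of_nonpos_left hlogL hneg⟩
  rw [one_div, Real.log_inv]
  refine tendsto_of_tendsto_of_tendsto_of_le_of_le'
    (aux_tendsto_renyi (Real.log cX) (Real.log M))
    (aux_tendsto_renyi (Real.log (∑ x', p x' z0)) (Real.log M)) ?_ ?_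
  · filter_upwards [eventually_ge_atTop (2:ℝ)] with α hα using (key α hα).1
  · filter_upwards [eventually_ge_atTop (2:ℝ)] with α hα using (key α hα).2
end

section
/- For a finite joint pmf p(x,z): H(X) − ∑_x p(x) D_α(p(z|x) ‖ p(z)) ≥ H̃_α(X|Z) for all α > 1, where H(X) is Shannon entropy, D_α is Rényi divergence of the channel output distributions, and H̃_α(X|Z) = (1/(1-α)) log(∑_z p(z) ∑_x p(x|z)^α). -/
open Finset Real

private lemma aux_jensen {X : Type*} [Fintype X] (w S : X → ℝ) (α : ℝ) (hα : 1 < α)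
    (hw : ∀ x, 0 < w x) (hw1 : ∑ x, w x = 1) (hS : ∀ x, 0 < S x) :
    (- ∑ x, w x * Real.log (w x)) - ∑ x, w x * ((1 / (α - 1)) * Real.log (S x))
      ≥ (1 / (1 - α)) * Real.log (∑ x, w x ^ α * S x) := by
  have hα1 : (0:ℝ) < α - 1 := by linarith
  have hf : ∀ x, 0 < w x ^ (α - 1) * S x := fun x =>
    mul_pos (Real.rpow_pos_of_pos (hw x) _) (hS x)
  have jensen : ∑ x, w x * Real.log (w x ^ (α - 1) * S x)
      ≤ Real.log (∑ x, w x * (w x ^ (α - 1) * S x)) := by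
    have h := (strictConcaveOn_log_Ioi.concaveOn).le_map_sum
      (fun x (_ : x ∈ Finset.univ) => (hw x).le) hw1
      (fun x _ => Set.mem_Ioi.2 (hf x))
    simpa [smul_eq_mul] using h
  have hlog : ∀ x, Real.log (w x ^ (α - 1) * S x)
      = (α - 1) * Real.log (w x) + Real.log (S x) := fun x => by
    rw [Real.log_mul (Real.rpow_pos_of_pos (hw x) _).ne' (hS x).ne',
        Real.log_rpow (hw x)]
  have hTw : ∑ x, w x * (w x ^ (α - 1) * S x) = ∑ x, w x ^ α * S x := by
    refine Finset.sum_congr rfl fun x _ => ?_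
    rw [← mul_assoc]
    congr 1
    have h := Real.rpow_add (hw x) 1 (α - 1)
    rw [Real.rpow_one] at h
    rw [← h]
    congr 1
    ring
  have key : (α - 1) * (∑ x, w x * Real.log (w x)) + (∑ x, w x * Real.log (S x))
      ≤ Real.log (∑ x, w x ^ α * S x) := by
    rw [← hTw]
    refine le_trans (le_of_eq ?_) jensen
    rw [Finset.mul_sum, ← Finset.sum_add_distrib]
    refine Finset.sum_congr rfl fun x _ => ?_
    rw [hlog x]; ring
  have hsum2 : ∑ x, w x * ((1 / (α - 1)) * Real.log (S x))
      = (1 / (α - 1)) * ∑ x, w x * Real.log (S x) := by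
    rw [Finset.mul_sum]
    exact Finset.sum_congr rfl fun x _ => by ring
  have h4 : (1 / (α - 1)) * ((α - 1) * (∑ x, w x * Real.log (w x)) + ∑ x, w x * Real.log (S x))
      ≤ (1 / (α - 1)) * Real.log (∑ x, w x ^ α * S x) :=
    mul_le_mul_of_nonneg_left key (by positivity)
  have h5 : (1 / (α - 1)) * ((α - 1) * (∑ x, w x * Real.log (w x)) + ∑ x, w x * Real.log (S x))
      = (∑ x, w x * Real.log (w x)) + (1 / (α - 1)) * ∑ x, w x * Real.log (S x) := by
    field_simp
  have h6 : (1:ℝ) / (1 - α) = -(1 / (α - 1)) := by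
    rw [← neg_sub α 1, div_neg]
  rw [ge_iff_le, hsum2, h6]
  linarith

/-- `H(X) − ∑_x p(x) D_α(p(z|x) ‖ p(z)) ≥ H̃_α(X|Z)` for `α > 1`. -/
theorem entropy_sub_renyi_div_ge_cond_renyi {X Z : Type*} [Fintype X] [Fintype Z]
    (p : X → Z → ℝ)
    (hp : ∀ x z, 0 ≤ p x z) (hsum : ∑ x, ∑ z, p x z = 1)
    (hposX : ∀ x, 0 < ∑ z', p x z') (hposZ : ∀ z, 0 < ∑ x', p x' z)
    (α : ℝ) (hα : 1 < α) :
    (- ∑ x, (∑ z', p x z') * Real.log (∑ z', p x z'))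
        - ∑ x, (∑ z', p x z') * ((1 / (α - 1)) *
            Real.log (∑ z, (∑ x', p x' z) *
              ((p x z / (∑ z', p x z')) / (∑ x', p x' z)) ^ α))
      ≥ (1 / (1 - α)) *
          Real.log (∑ z, (∑ x', p x' z) * ∑ x, (p x z / (∑ x', p x' z)) ^ α) := by
  have hS : ∀ x, 0 < ∑ z, (∑ x', p x' z) *
      ((p x z / (∑ z', p x z')) / (∑ x', p x' z)) ^ α := by
    intro x
    obtain ⟨z0, hz0⟩ : ∃ z, 0 < p x z := by
      by_contra h
      push_neg at h
      have h2 : ∑ z', p x z' ≤ 0 := Finset.sum_nonpos fun z _ => h z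
      exact absurd h2 (not_le.2 (hposX x))
    refine Finset.sum_pos' (fun z _ => ?_) ⟨z0, Finset.mem_univ z0, ?_⟩
    · exact mul_nonneg (hposZ z).le
        (Real.rpow_nonneg (div_nonneg (div_nonneg (hp x z) (hposX x).le) (hposZ z).le) α)
    · exact mul_pos (hposZ z0)
        (Real.rpow_pos_of_pos (div_pos (div_pos hz0 (hposX x)) (hposZ z0)) α)
  have hT : (∑ z, (∑ x', p x' z) * ∑ x, (p x z / (∑ x', p x' z)) ^ α)
      = ∑ x, (∑ z', p x z') ^ α *
          ∑ z, (∑ x', p x' z) * ((p x z / (∑ z', p x z')) / (∑ x', p x' z)) ^ α := by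
    simp_rw [Finset.mul_sum]
    rw [Finset.sum_comm]
    refine Finset.sum_congr rfl fun x _ => Finset.sum_congr rfl fun z _ => ?_
    have hx := hposX x
    have hz := hposZ z
    rw [div_right_comm, Real.div_rpow (div_nonneg (hp x z) hz.le) hx.le]
    have hne : (∑ z', p x z') ^ α ≠ 0 := (Real.rpow_pos_of_pos hx α).ne'
    field_simp
  rw [hT]
  exact aux_jensen (fun x => ∑ z', p x z')
    (fun x => ∑ z, (∑ x', p x' z) * ((p x z / (∑ z', p x z')) / (∑ x', p x' z)) ^ α)
    α hα hposX hsum hS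
end
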